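/- arXiv:1805.00591 — 3 statements merged into one kernel-verified Lean document; each statement's English description precedes it below -/
import Mathlib

section
/- For every integer n ≥ 2 and all x, s ∈ ℝ^n one has det̄(x ◇ s) ≤ det̄(x)·det̄(s), and equality holds if and only if the vectors x̄ and s̄ are linearly dependent. -/
noncomputable section

open Real Finset

/-- Euclidean dot product of two vectors in `ℝ^n`. -/
def dotp {n : ℕ} (x y : Fin n → ℝ) : ℝ := ∑ i, x i * y i

/-- Euclidean norm of a vector in `ℝ^n`. -/
def enormR {n : ℕ} (x : Fin n → ℝ) : ℝ := Real.sqrt (∑ i, (x i) ^ 2)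

/-- The tail `x̄ = (x_3, …, x_n)` of a vector, embedded back into `ℝ^n`
(first two coordinates replaced by `0`). Indices are 0-based, so the tail
consists of the coordinates with index `≥ 2`. -/
def tl {n : ℕ} (x : Fin (n + 2) → ℝ) : Fin (n + 2) → ℝ :=
  fun i => if 2 ≤ (i : ℕ) then x i else 0

/-- The eigenvalue `λ1(x) = x_1 - x_2`. -/
def lam1 {n : ℕ} (x : Fin (n + 2) → ℝ) : ℝ := x 0 - x 1

/-- The eigenvalue `λ2(x) = x_1 + x_2 - √2 ‖x̄‖`. -/
def lam2 {n : ℕ} (x : Fin (n + 2) → ℝ) : ℝ := x 0 + x 1 - Real.sqrt 2 * enormR (tl x)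

/-- The eigenvalue `λ4(x) = x_1 + x_2 + √2 ‖x̄‖`. -/
def lam4 {n : ℕ} (x : Fin (n + 2) → ℝ) : ℝ := x 0 + x 1 + Real.sqrt 2 * enormR (tl x)

/-- The Jordan-type product `x ◇ s`. -/
def diam {n : ℕ} (x s : Fin (n + 2) → ℝ) : Fin (n + 2) → ℝ :=
  fun i =>
    if (i : ℕ) = 0 then dotp x s
    else if (i : ℕ) = 1 then x 1 * s 0 + x 0 * s 1 + dotp (tl x) (tl s)
    else (s 0 + s 1) * x i + (x 0 + x 1) * s i

/-- The trace `Tr(x) = 2 x_1`. -/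
def trace {n : ℕ} (x : Fin (n + 2) → ℝ) : ℝ := 2 * x 0

/-- `det̄(x) = (x_1 + x_2)² - 2 ‖x̄‖²`. -/
def detbar {n : ℕ} (x : Fin (n + 2) → ℝ) : ℝ := (x 0 + x 1) ^ 2 - 2 * (enormR (tl x)) ^ 2

/-- `det(x) = x_1² + x_2² - ‖x̄‖²`. -/
def det2 {n : ℕ} (x : Fin (n + 2) → ℝ) : ℝ := (x 0) ^ 2 + (x 1) ^ 2 - (enormR (tl x)) ^ 2

/-- `det_(x) = 2 x_1 x_2 - ‖x̄‖²`. -/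
def detund {n : ℕ} (x : Fin (n + 2) → ℝ) : ℝ := 2 * x 0 * x 1 - (enormR (tl x)) ^ 2

/-- Membership in the type-2 second order cone `Υ^n`. -/
def inCone {n : ℕ} (x : Fin (n + 2) → ℝ) : Prop := 0 ≤ lam1 x ∧ 0 ≤ lam2 x

/-- Membership in the interior `Υ^n_+` of the type-2 second order cone. -/
def inConeInt {n : ℕ} (x : Fin (n + 2) → ℝ) : Prop := 0 < lam1 x ∧ 0 < lam2 x

/-- The unit element `e = (1, 0, …, 0)`. -/
def eVec {n : ℕ} : Fin (n + 2) → ℝ := fun i => if (i : ℕ) = 0 then 1 else 0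

/-- The spectral vector `g(x) = g(λ1(x)) v1 + g(λ2(x)) v2 + g(λ4(x)) v4`.
Its tail entries are `(g(λ4(x)) - g(λ2(x))) xᵢ / (2√2 ‖x̄‖)` when `x̄ ≠ 0`;
when `x̄ = 0` the written formula evaluates to `0` automatically since then
`xᵢ = 0` for `i ≥ 2`. -/
def specVec {n : ℕ} (g : ℝ → ℝ) (x : Fin (n + 2) → ℝ) : Fin (n + 2) → ℝ :=
  fun i =>
    if (i : ℕ) = 0 then (1 / 2) * g (lam1 x) + (1 / 4) * g (lam2 x) + (1 / 4) * g (lam4 x)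
    else if (i : ℕ) = 1 then -(1 / 2) * g (lam1 x) + (1 / 4) * g (lam2 x) + (1 / 4) * g (lam4 x)
    else (g (lam4 x) - g (lam2 x)) * x i / (2 * Real.sqrt 2 * enormR (tl x))

/-- The barrier value `Ψ(x) = ψ(λ1(x)) + ½ψ(λ2(x)) + ½ψ(λ4(x))`. -/
def Psi {n : ℕ} (g : ℝ → ℝ) (x : Fin (n + 2) → ℝ) : ℝ :=
  g (lam1 x) + (1 / 2) * g (lam2 x) + (1 / 2) * g (lam4 x)

/-- The barrier value of a block vector. -/
def PsiBlk {N : ℕ} {nf : Fin N → ℕ} (g : ℝ → ℝ) (v : ∀ j, Fin (nf j + 2) → ℝ) : ℝ :=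
  ∑ j, Psi g (v j)

/-- The norm-based proximity `δ(v) = (1/√2) (Σⱼ ‖ψ'(vʲ)‖²)^{1/2}`. -/
def deltaBlk {N : ℕ} {nf : Fin N → ℕ} (g : ℝ → ℝ) (v : ∀ j, Fin (nf j + 2) → ℝ) : ℝ :=
  (1 / Real.sqrt 2) * Real.sqrt (∑ j, (enormR (specVec g (v j))) ^ 2)

/-- `λ_min(v) = minⱼ min{λ1(vʲ), λ2(vʲ)}`. -/
def lamMin {N : ℕ} {nf : Fin N → ℕ} (v : ∀ j, Fin (nf j + 2) → ℝ) : ℝ :=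
  ⨅ j, min (lam1 (v j)) (lam2 (v j))

lemma enorm_sq' {m : ℕ} (x : Fin m → ℝ) : (enormR x) ^ 2 = ∑ i, (x i) ^ 2 :=
  Real.sq_sqrt (Finset.sum_nonneg fun _ _ => sq_nonneg _)

lemma tl_apply_ge {n : ℕ} (x : Fin (n + 2) → ℝ) (i : Fin (n + 2)) (h : 2 ≤ (i : ℕ)) :
    tl x i = x i := if_pos h

lemma tl_diam {n : ℕ} (x s : Fin (n + 2) → ℝ) :
    tl (diam x s) = fun i => (s 0 + s 1) * tl x i + (x 0 + x 1) * tl s i := by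
  funext i
  unfold tl diam
  by_cases h : 2 ≤ (i : ℕ)
  · have h0 : ¬ ((i : ℕ) = 0) := by omega
    have h1 : ¬ ((i : ℕ) = 1) := by omega
    simp [h, h0, h1]
  · simp [h]

lemma sum_scaled {m : ℕ} (u v : Fin m → ℝ) (b a : ℝ) :
    ∑ i, (b * u i + a * v i) ^ 2 =
      b ^ 2 * (∑ i, (u i) ^ 2) + 2 * a * b * (∑ i, u i * v i) + a ^ 2 * (∑ i, (v i) ^ 2) := by
  rw [Finset.mul_sum, Finset.mul_sum, Finset.mul_sum, ← Finset.sum_add_distrib,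
    ← Finset.sum_add_distrib]
  exact Finset.sum_congr rfl fun i _ => by ring

lemma key_identity {n : ℕ} (x s : Fin (n + 2) → ℝ) :
    detbar (diam x s) = detbar x * detbar s
      - 4 * ((∑ i, (tl x i) ^ 2) * (∑ i, (tl s i) ^ 2) - (∑ i, tl x i * tl s i) ^ 2) := by
  have hd0 : diam x s 0 = dotp x s := by simp [diam]
  have hd1 : diam x s 1 = x 1 * s 0 + x 0 * s 1 + dotp (tl x) (tl s) := by simp [diam]
  have hdot : dotp x s = x 0 * s 0 + x 1 * s 1 + ∑ i, tl x i * tl s i := by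
    unfold dotp
    rw [Fin.sum_univ_succ, Fin.sum_univ_succ, Fin.sum_univ_succ (f := fun i => tl x i * tl s i),
      Fin.sum_univ_succ (f := fun i : Fin (n + 1) => tl x i.succ * tl s i.succ)]
    have h0 : tl x 0 = 0 := by simp [tl]
    have h1 : tl x ((0 : Fin (n+1)).succ) = 0 := by simp [tl]
    have hcong : ∀ i : Fin n, x i.succ.succ * s i.succ.succ = tl x i.succ.succ * tl s i.succ.succ := by
      intro i
      rw [tl_apply_ge, tl_apply_ge] <;> simp [Fin.val_succ]
    rw [Finset.sum_congr rfl (fun i _ => hcong i), h0, h1]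
    simp only [Fin.succ_zero_eq_one]
    ring
  unfold detbar
  rw [hd0, hd1, tl_diam, enorm_sq', enorm_sq', enorm_sq', hdot]
  unfold dotp
  rw [sum_scaled]
  ring

lemma dep_sum_eq {m : ℕ} (u v : Fin m → ℝ) (c : ℝ) (h : ∀ i, u i = c * v i) :
    (∑ i, u i * v i) ^ 2 = (∑ i, (u i) ^ 2) * (∑ i, (v i) ^ 2) := by
  have h1 : ∑ i, u i * v i = c * ∑ i, (v i) ^ 2 := by
    rw [Finset.mul_sum]; exact Finset.sum_congr rfl fun i _ => by rw [h i]; ring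
  have h2 : ∑ i, (u i) ^ 2 = c ^ 2 * ∑ i, (v i) ^ 2 := by
    rw [Finset.mul_sum]; exact Finset.sum_congr rfl fun i _ => by rw [h i]; ring
  rw [h1, h2]; ring

open scoped RealInnerProductSpace

/-- Equality case of Cauchy–Schwarz for finite sums, in the form needed below. -/
lemma cs_eq_iff {m : ℕ} (u v : Fin m → ℝ) :
    (∑ i, u i * v i) ^ 2 = (∑ i, (u i) ^ 2) * (∑ i, (v i) ^ 2) ↔
      ∃ a b : ℝ, (a ≠ 0 ∨ b ≠ 0) ∧ a • u + b • v = 0 := by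
  constructor
  · intro heq
    by_cases hu : u = 0
    · exact ⟨1, 0, Or.inl one_ne_zero, by simp [hu]⟩
    by_cases hv : v = 0
    · exact ⟨0, 1, Or.inr one_ne_zero, by simp [hv]⟩
    · -- use inner product space equality case
      set U : EuclideanSpace ℝ (Fin m) := WithLp.toLp 2 u with hU
      set V : EuclideanSpace ℝ (Fin m) := WithLp.toLp 2 v with hV
      have hUne : U ≠ 0 := fun h => hu (funext fun i => by simpa [hU] using congrArg (fun w : EuclideanSpace ℝ (Fin m) => w i) h)
      have hVne : V ≠ 0 := fun h => hv (funext fun i => by simpa [hV] using congrArg (fun w : EuclideanSpace ℝ (Fin m) => w i) h)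
      have hinner : (inner ℝ U V : ℝ) = ∑ i, u i * v i := by
        simp [hU, hV, PiLp.inner_apply, RCLike.inner_apply, mul_comm]
      have hnU : ‖U‖ ^ 2 = ∑ i, (u i) ^ 2 := by
        rw [← real_inner_self_eq_norm_sq]
        rw [PiLp.inner_apply]; simp [hU, hV, RCLike.inner_apply, sq]
      have hnV : ‖V‖ ^ 2 = ∑ i, (v i) ^ 2 := by
        rw [← real_inner_self_eq_norm_sq]
        rw [PiLp.inner_apply]; simp [hU, hV, RCLike.inner_apply, sq]
      have hsq : (inner ℝ U V : ℝ) ^ 2 = (‖U‖ * ‖V‖) ^ 2 := by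
        rw [hinner, heq, ← hnU, ← hnV]; ring
      have habs : ‖(inner ℝ U V : ℝ)‖ = ‖U‖ * ‖V‖ := by
        rw [Real.norm_eq_abs, ← Real.sqrt_sq_eq_abs, hsq,
          Real.sqrt_sq (mul_nonneg (norm_nonneg _) (norm_nonneg _))]
      obtain ⟨r, hr, hrv⟩ := (norm_inner_eq_norm_iff hUne hVne).mp habs
      refine ⟨r, -1, Or.inl hr, funext fun i => ?_⟩
      have hvi : v i = r * u i := by
        have := congrArg (fun w : EuclideanSpace ℝ (Fin m) => w i) hrv
        simpa [hU, hV, PiLp.smul_apply, smul_eq_mul] using this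
      show r * u i + (-1) * v i = 0
      rw [hvi]; ring
  · rintro ⟨a, b, hab, hsum⟩
    rcases hab with ha | hb
    · have h : ∀ i, u i = (-(b / a)) * v i := by
        intro i
        have := congrFun hsum i
        simp [Pi.add_apply, Pi.smul_apply, smul_eq_mul] at this
        field_simp
        linarith
      exact dep_sum_eq u v _ h
    · have h : ∀ i, v i = (-(a / b)) * u i := by
        intro i
        have := congrFun hsum i
        simp [Pi.add_apply, Pi.smul_apply, smul_eq_mul] at this
        field_simp
        linarith
      have := dep_sum_eq v u _ h
      calc (∑ i, u i * v i) ^ 2 = (∑ i, v i * u i) ^ 2 := by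
            congr 1; exact Finset.sum_congr rfl fun i _ => mul_comm _ _
        _ = (∑ i, (v i) ^ 2) * (∑ i, (u i) ^ 2) := this
        _ = (∑ i, (u i) ^ 2) * (∑ i, (v i) ^ 2) := mul_comm _ _

/-- `det̄(x ◇ s) ≤ det̄(x) det̄(s)`, with equality iff the tails
`x̄` and `s̄` are linearly dependent. -/
theorem stmt5 (n : ℕ) (x s : Fin (n + 2) → ℝ) :
    detbar (diam x s) ≤ detbar x * detbar s ∧
    (detbar (diam x s) = detbar x * detbar s ↔
      ∃ a b : ℝ, (a ≠ 0 ∨ b ≠ 0) ∧ a • tl x + b • tl s = 0) := by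
  have hid := key_identity x s
  have hcs := Finset.sum_mul_sq_le_sq_mul_sq Finset.univ (fun i => tl x i) (fun i => tl s i)
  constructor
  · nlinarith [hcs]
  · rw [hid]
    constructor
    · intro h
      have : (∑ i, tl x i * tl s i) ^ 2 = (∑ i, (tl x i) ^ 2) * (∑ i, (tl s i) ^ 2) := by
        nlinarith
      exact (cs_eq_iff (tl x) (tl s)).mp this
    · intro h
      have := (cs_eq_iff (tl x) (tl s)).mpr h
      nlinarith

end
end

section
/- Let ψ : (0,∞) → ℝ be strictly convex and let n ≥ 2. Then the barrier function Ψ is strictly convex on Υ^n_+: for all x, s ∈ Υ^n_+ with x ≠ s one has Ψ((x+s)/2) < (1/2)Ψ(x) + (1/2)Ψ(s). -/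
noncomputable section

open Real Finset

-- ## Auxiliary lemmas

lemma enorm_eq_norm' {k : ℕ} (x : Fin k → ℝ) :
    enormR x = ‖(WithLp.equiv 2 (Fin k → ℝ)).symm x‖ := by
  rw [EuclideanSpace.norm_eq]
  simp [enormR, Real.norm_eq_abs, sq_abs]

lemma enorm_nonneg' {k : ℕ} (a : Fin k → ℝ) : 0 ≤ enormR a := Real.sqrt_nonneg _

lemma enorm_add_le' {k : ℕ} (a b : Fin k → ℝ) : enormR (a + b) ≤ enormR a + enormR b := by
  rw [enorm_eq_norm', enorm_eq_norm', enorm_eq_norm']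
  exact norm_add_le _ _

lemma enorm_smul' {k : ℕ} (c : ℝ) (a : Fin k → ℝ) : enormR (c • a) = |c| * enormR a := by
  rw [enorm_eq_norm', enorm_eq_norm']
  rw [show (WithLp.equiv 2 (Fin k → ℝ)).symm (c • a)
      = c • (WithLp.equiv 2 (Fin k → ℝ)).symm a from rfl]
  rw [norm_smul, Real.norm_eq_abs]

lemma enorm_add_lt' {k : ℕ} {a b : Fin k → ℝ} (hab : a ≠ b) (h : enormR a = enormR b) :
    enormR (a + b) < 2 * enormR a := by
  rw [enorm_eq_norm', enorm_eq_norm'] at *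
  set A := (WithLp.equiv 2 (Fin k → ℝ)).symm a with hA
  set B := (WithLp.equiv 2 (Fin k → ℝ)).symm b with hB
  have hAB : A ≠ B := fun hh => hab ((WithLp.equiv 2 (Fin k → ℝ)).symm.injective hh)
  have hpar := parallelogram_law_with_norm ℝ A B
  have hsub : 0 < ‖A - B‖ := by
    rw [norm_pos_iff]; exact sub_ne_zero.mpr hAB
  have h2 : ‖A + B‖ ^ 2 < (2 * ‖A‖) ^ 2 := by nlinarith [norm_nonneg (A + B), norm_nonneg A]
  have heq : (WithLp.equiv 2 (Fin k → ℝ)).symm (a + b) = A + B := rfl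
  rw [heq]
  exact lt_of_pow_lt_pow_left₀ 2 (by positivity) h2

lemma lam2_le_lam4' {k : ℕ} (x : Fin (k + 2) → ℝ) : lam2 x ≤ lam4 x := by
  have := mul_nonneg (Real.sqrt_nonneg 2) (enorm_nonneg' (tl x))
  simp only [lam2, lam4]; linarith

lemma midpt_le (f : ℝ → ℝ) (hf : ConvexOn ℝ (Set.Ioi 0) f) {p q : ℝ}
    (hp : 0 < p) (hq : 0 < q) : f (2⁻¹ * (p + q)) ≤ 2⁻¹ * f p + 2⁻¹ * f q := by
  have := hf.2 (Set.mem_Ioi.2 hp) (Set.mem_Ioi.2 hq)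
    (by norm_num : (0:ℝ) ≤ 2⁻¹) (by norm_num : (0:ℝ) ≤ 2⁻¹) (by norm_num)
  simpa [smul_eq_mul, mul_add] using this

lemma midpt_lt (f : ℝ → ℝ) (hf : StrictConvexOn ℝ (Set.Ioi 0) f) {p q : ℝ}
    (hp : 0 < p) (hq : 0 < q) (hne : p ≠ q) :
    f (2⁻¹ * (p + q)) < 2⁻¹ * f p + 2⁻¹ * f q := by
  have := hf.2 (Set.mem_Ioi.2 hp) (Set.mem_Ioi.2 hq) hne
    (by norm_num : (0:ℝ) < 2⁻¹) (by norm_num : (0:ℝ) < 2⁻¹) (by norm_num)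
  simpa [smul_eq_mul, mul_add] using this

lemma interp_lt (f : ℝ → ℝ) (hf : StrictConvexOn ℝ (Set.Ioi 0) f) {A B a b : ℝ}
    (hA : 0 < A) (hAa : A < a) (hab : a ≤ b) (hbB : b < B) (hsum : a + b = A + B) :
    f a + f b < f A + f B := by
  have hAB : A < B := lt_of_lt_of_le (lt_of_lt_of_le hAa hab) hbB.le
  have hB : 0 < B := hA.trans hAB
  set t : ℝ := (B - a) / (B - A) with ht
  have hBA : (0:ℝ) < B - A := sub_pos.2 hAB
  have htm : t * (B - A) = B - a := div_mul_cancel₀ _ (ne_of_gt hBA)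
  have haB : a < B := lt_of_le_of_lt hab hbB
  have ht0 : 0 < t := div_pos (sub_pos.2 haB) hBA
  have ht1 : t < 1 := by
    rw [div_lt_one hBA]; linarith
  have h1 := hf.2 (Set.mem_Ioi.2 hA) (Set.mem_Ioi.2 hB) (ne_of_lt hAB) ht0
    (by linarith : (0:ℝ) < 1 - t) (by ring)
  have h2 := hf.2 (Set.mem_Ioi.2 hA) (Set.mem_Ioi.2 hB) (ne_of_lt hAB)
    (by linarith : (0:ℝ) < 1 - t) ht0 (by ring)
  rw [smul_eq_mul, smul_eq_mul, smul_eq_mul, smul_eq_mul] at h1 h2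
  have e1 : t * A + (1 - t) * B = a := by nlinarith [htm]
  have e2 : (1 - t) * A + t * B = b := by nlinarith [htm]
  rw [e1] at h1; rw [e2] at h2
  linarith

lemma interp_le (f : ℝ → ℝ) (hf : StrictConvexOn ℝ (Set.Ioi 0) f) {A B a b : ℝ}
    (hA : 0 < A) (hAa : A ≤ a) (hab : a ≤ b) (hbB : b ≤ B) (hsum : a + b = A + B) :
    f a + f b ≤ f A + f B := by
  rcases eq_or_lt_of_le hAa with h | h
  · have : b = B := by linarith
    rw [← h, this]
  · rcases eq_or_lt_of_le hbB with h' | h'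
    · have ha : a = A := by linarith
      rw [ha, h']
    · exact (interp_lt f hf hA h hab h' hsum).le

/-- if `ψ : (0,∞) → ℝ` is strictly convex then `Ψ` is strictly
convex on `Υ^n_+`: for `x ≠ s` in `Υ^n_+`, `Ψ((x+s)/2) < ½Ψ(x) + ½Ψ(s)`. -/
theorem stmt8 (n : ℕ) (f : ℝ → ℝ) (hf : StrictConvexOn ℝ (Set.Ioi 0) f)
    (x s : Fin (n + 2) → ℝ) (hx : inConeInt x) (hs : inConeInt s) (hxs : x ≠ s) :
    Psi f ((2⁻¹ : ℝ) • (x + s)) < (1 / 2) * Psi f x + (1 / 2) * Psi f s := by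
  obtain ⟨hx1, hx2⟩ := hx
  obtain ⟨hs1, hs2⟩ := hs
  set m := (2⁻¹ : ℝ) • (x + s) with hm
  have hm0 : m 0 = 2⁻¹ * (x 0 + s 0) := by simp [hm, mul_add]
  have hm1 : m 1 = 2⁻¹ * (x 1 + s 1) := by simp [hm, mul_add]
  have htlm : tl m = (2⁻¹ : ℝ) • (tl x + tl s) := by
    funext i
    by_cases hi : 2 ≤ (i : ℕ) <;> simp [tl, hi, hm, mul_add]
  have hsq2 : (0:ℝ) < Real.sqrt 2 := Real.sqrt_pos.2 (by norm_num)
  have h4x : 0 < lam4 x := lt_of_lt_of_le hx2 (lam2_le_lam4' x)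
  have h4s : 0 < lam4 s := lt_of_lt_of_le hs2 (lam2_le_lam4' s)
  have hemid : enormR (tl m) ≤ 2⁻¹ * (enormR (tl x) + enormR (tl s)) := by
    rw [htlm, enorm_smul', abs_of_nonneg (by norm_num : (0:ℝ) ≤ 2⁻¹)]
    have := enorm_add_le' (tl x) (tl s)
    linarith
  set A1 := 2⁻¹ * (lam1 x + lam1 s) with hA1
  set A2 := 2⁻¹ * (lam2 x + lam2 s) with hA2
  set B4 := 2⁻¹ * (lam4 x + lam4 s) with hB4
  have hl1m : lam1 m = A1 := by
    rw [hA1]; simp only [lam1]; rw [hm0, hm1]; ring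
  have hA2pos : 0 < A2 := by rw [hA2]; positivity
  have hB4pos : 0 < B4 := by rw [hB4]; positivity
  have hmul : Real.sqrt 2 * enormR (tl m)
      ≤ 2⁻¹ * (Real.sqrt 2 * enormR (tl x)) + 2⁻¹ * (Real.sqrt 2 * enormR (tl s)) := by
    have := mul_le_mul_of_nonneg_left hemid hsq2.le
    nlinarith
  have hge2 : A2 ≤ lam2 m := by
    rw [hA2]; simp only [lam2]; rw [hm0, hm1]; linarith
  have hle4 : lam4 m ≤ B4 := by
    rw [hB4]; simp only [lam4]; rw [hm0, hm1]; linarith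
  have hsum24 : lam2 m + lam4 m = A2 + B4 := by
    rw [hA2, hB4]; simp only [lam2, lam4]; rw [hm0, hm1]; ring
  have h2le4m : lam2 m ≤ lam4 m := lam2_le_lam4' m
  have hfa : f A2 ≤ 2⁻¹ * f (lam2 x) + 2⁻¹ * f (lam2 s) :=
    midpt_le f hf.convexOn hx2 hs2
  have hfb : f B4 ≤ 2⁻¹ * f (lam4 x) + 2⁻¹ * f (lam4 s) :=
    midpt_le f hf.convexOn h4x h4s
  simp only [Psi, hl1m]
  by_cases h1 : lam1 x = lam1 s
  · have hf1 : f A1 = 2⁻¹ * f (lam1 x) + 2⁻¹ * f (lam1 s) := by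
      have : A1 = lam1 s := by rw [hA1, h1]; ring
      rw [this, h1]; ring
    by_cases h24 : lam2 x = lam2 s ∧ lam4 x = lam4 s
    · obtain ⟨h2, h4⟩ := h24
      simp only [lam2] at h2
      simp only [lam4] at h4
      simp only [lam1] at h1
      have hx0 : x 0 = s 0 := by linarith
      have hx1' : x 1 = s 1 := by linarith
      have hen : enormR (tl x) = enormR (tl s) := by
        have hne : Real.sqrt 2 ≠ 0 := ne_of_gt hsq2
        have : Real.sqrt 2 * enormR (tl x) = Real.sqrt 2 * enormR (tl s) := by linarith
        exact mul_left_cancel₀ hne this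
      have htlne : tl x ≠ tl s := by
        intro hE
        apply hxs
        funext i
        by_cases hi : 2 ≤ (i : ℕ)
        · have := congrFun hE i
          simpa [tl, hi] using this
        · have h' : (i : ℕ) = 0 ∨ (i : ℕ) = 1 := by omega
          rcases h' with h' | h'
          · have : i = 0 := Fin.ext (by simp [h'])
            rw [this]; exact hx0
          · have : i = 1 := Fin.ext (by simp [h'])
            rw [this]; exact hx1'
      have hlt : enormR (tl m) < enormR (tl x) := by
        have h' := enorm_add_lt' htlne hen
        rw [htlm, enorm_smul', abs_of_nonneg (by norm_num : (0:ℝ) ≤ 2⁻¹)]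
        linarith
      have hmul' : Real.sqrt 2 * enormR (tl m) < Real.sqrt 2 * enormR (tl x) :=
        mul_lt_mul_of_pos_left hlt hsq2
    -- strict bounds
      have hA2x : A2 = lam2 x := by
        rw [hA2]; simp only [lam2]; rw [hx0, hx1', hen]; ring
      have hB4x : B4 = lam4 x := by
        rw [hB4]; simp only [lam4]; rw [hx0, hx1', hen]; ring
      have hlt2 : A2 < lam2 m := by
        rw [hA2x]; simp only [lam2]; rw [hm0, hm1, hx0, hx1']; linarith
      have hlt4 : lam4 m < B4 := by
        rw [hB4x]; simp only [lam4]; rw [hm0, hm1, hx0, hx1']; linarith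
      have key := interp_lt f hf hA2pos hlt2 h2le4m hlt4 hsum24
      linarith [hf1]
    · have key := interp_le f hf hA2pos hge2 h2le4m hle4 hsum24
      by_cases h2 : lam2 x = lam2 s
      · have h4 : lam4 x ≠ lam4 s := fun h4 => h24 ⟨h2, h4⟩
        have hfb' : f B4 < 2⁻¹ * f (lam4 x) + 2⁻¹ * f (lam4 s) :=
          midpt_lt f hf h4x h4s h4
        linarith [hf1]
      · have hfa' : f A2 < 2⁻¹ * f (lam2 x) + 2⁻¹ * f (lam2 s) :=
          midpt_lt f hf hx2 hs2 h2
        linarith [hf1]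
  · have hf1 : f A1 < 2⁻¹ * f (lam1 x) + 2⁻¹ * f (lam1 s) :=
      midpt_lt f hf hx1 hs1 h1
    have key := interp_le f hf hA2pos hge2 h2le4m hle4 hsum24
    linarith


end
end

section
/- Let ψ : (0,∞) → ℝ be differentiable with derivative ψ', let ψ' be differentiable with derivative ψ'', assume ψ''(t) > 0 for all t > 0 and that ψ'' is monotonically decreasing on (0,∞), and let ρ : [0,∞) → (0,1] satisfy −ψ'(ρ(s)) = 2s for all s ≥ 0. Then for every δ > 0 the step size ᾱ = (ρ(√2·δ) − ρ(2√2·δ))/(2√2·δ) satisfies ᾱ ≥ 1/ψ''(ρ(2√2·δ)). -/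
noncomputable section

open Real Finset

/-- with `ψ` twice differentiable on `(0,∞)`, `ψ'' > 0` and `ψ''`
monotonically decreasing there, and `ρ : [0,∞) → (0,1]` the inverse of
`t ↦ -(1/2)ψ'(t)` (so `-ψ'(ρ(s)) = 2s`), for every `δ > 0` the step size
`ᾱ = (ρ(√2 δ) - ρ(2√2 δ))/(2√2 δ)` satisfies `ᾱ ≥ 1/ψ''(ρ(2√2 δ))`. -/
theorem stmt16 (f f' f'' : ℝ → ℝ)
    (hd1 : ∀ t > (0 : ℝ), HasDerivAt f (f' t) t)
    (hd2 : ∀ t > (0 : ℝ), HasDerivAt f' (f'' t) t)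
    (hpos : ∀ t > (0 : ℝ), 0 < f'' t)
    (hdec : AntitoneOn f'' (Set.Ioi 0))
    (ρ : ℝ → ℝ)
    (hρ : ∀ s : ℝ, 0 ≤ s → 0 < ρ s ∧ ρ s ≤ 1 ∧ -f' (ρ s) = 2 * s)
    (δ : ℝ) (hδ : 0 < δ) :
    (ρ (Real.sqrt 2 * δ) - ρ (2 * Real.sqrt 2 * δ)) / (2 * Real.sqrt 2 * δ)
      ≥ 1 / f'' (ρ (2 * Real.sqrt 2 * δ)) := by
  have h2 : (0:ℝ) < Real.sqrt 2 := by positivity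
  set s1 := Real.sqrt 2 * δ with hs1
  set s2 := 2 * Real.sqrt 2 * δ with hs2
  have hs1pos : 0 < s1 := by positivity
  have hs2pos : 0 < s2 := by positivity
  obtain ⟨hbpos, hble, hbval⟩ := hρ s1 hs1pos.le
  obtain ⟨hapos, hale, haval⟩ := hρ s2 hs2pos.le
  set a := ρ s2 with ha
  set b := ρ s1 with hb
  -- f' is strictly monotone on Ioi 0
  have hcont : ContinuousOn f' (Set.Ioi 0) := fun x hx =>
    ((hd2 x hx).continuousAt).continuousWithinAt
  have hmono : StrictMonoOn f' (Set.Ioi 0) := by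
    apply StrictMonoOn.mono (s := Set.Ioi 0) ?_ le_rfl
    apply strictMonoOn_of_deriv_pos (convex_Ioi 0) hcont
    intro x hx
    rw [interior_Ioi] at hx
    rw [(hd2 x hx).deriv]
    exact hpos x hx
  have haIoi : a ∈ Set.Ioi (0:ℝ) := hapos
  have hbIoi : b ∈ Set.Ioi (0:ℝ) := hbpos
  have hab : a < b := by
    have hflt : f' a < f' b := by
      have h1 : f' a = -(2 * s2) := by linarith [haval]
      have h2 : f' b = -(2 * s1) := by linarith [hbval]
      rw [h1, h2]
      have : s1 < s2 := by
        rw [hs1, hs2]; nlinarith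
      linarith
    exact (hmono.lt_iff_lt haIoi hbIoi).mp hflt
  -- MVT for f' on [a, b]
  have hcont' : ContinuousOn f' (Set.Icc a b) := by
    apply hcont.mono
    intro x hx
    exact lt_of_lt_of_le hapos hx.1
  have hder : ∀ x ∈ Set.Ioo a b, HasDerivAt f' (f'' x) x := fun x hx =>
    hd2 x (lt_trans hapos hx.1)
  obtain ⟨c, hc, hcval⟩ := exists_hasDerivAt_eq_slope f' f'' hab hcont' hder
  have hcIoi : c ∈ Set.Ioi (0:ℝ) := lt_trans hapos hc.1
  have hcle : f'' c ≤ f'' a := hdec haIoi hcIoi hc.1.le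
  have hslope : f' b - f' a = 2 * s1 := by
    have h1 : f' a = -(2 * s2) := by linarith [haval]
    have h2 : f' b = -(2 * s1) := by linarith [hbval]
    rw [h1, h2, hs1, hs2]; ring
  have hba : 0 < b - a := by linarith
  have hkey : 2 * s1 ≤ f'' a * (b - a) := by
    have : f'' c * (b - a) = f' b - f' a := by
      rw [hcval]; field_simp
    nlinarith [hpos c hcIoi]
  have hfa : 0 < f'' a := hpos a haIoi
  rw [ge_iff_le, div_le_div_iff₀ hfa (by positivity : (0:ℝ) < 2 * Real.sqrt 2 * δ)]
  have : (2 : ℝ) * Real.sqrt 2 * δ = 2 * s1 := by rw [hs1]; ring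
  rw [this]
  nlinarith

end
end
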